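/- arXiv:math/0005168 — 6 statements merged into one kernel-verified Lean document; each statement's English description precedes it below -/
import Mathlib

section
/- Let H be a complex Hilbert space, let [0,I] be the set of effects on H, and let X be a complex vector space. If φ : [0,I] → X is an affine map with φ(0) = 0, then there exists a unique complex-linear map Φ : B(H) → X whose restriction to [0,I] equals φ. -/
set_option maxHeartbeats 1000000
set_option synthInstance.maxHeartbeats 1000000
section Aux
variable {H : Type*} [NormedAddCommGroup H] [InnerProductSpace ℂ H] [CompleteSpace H]

private lemma sa_le_smul_one {A : H →L[ℂ] H} (h : IsSelfAdjoint A) {c : ℝ} (hc : ‖A‖ ≤ c) :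
    A ≤ (c : ℂ) • 1 := by
  refine le_trans h.le_algebraMap_norm_self ?_
  rw [Algebra.algebraMap_eq_smul_one]
  rw [← sub_nonneg]
  have : (c : ℂ) • (1 : H →L[ℂ] H) - (‖A‖ : ℝ) • 1 = ((c - ‖A‖ : ℝ)) • (1 : H →L[ℂ] H) := by
    rw [sub_smul]
    norm_num
  rw [this]
  exact smul_nonneg (sub_nonneg.2 hc) zero_le_one

private lemma smul_one_nonneg {c : ℝ} (hc : 0 ≤ c) : (0:H →L[ℂ] H) ≤ (c : ℂ) • 1 := by
  norm_cast
  exact smul_nonneg hc zero_le_one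

private lemma eff_nonneg {A : H →L[ℂ] H} (hA : 0 ≤ A) {c : ℝ} (hc : 0 ≤ c) :
    0 ≤ (c : ℂ) • A := by
  norm_cast
  exact smul_nonneg hc hA

private lemma eff_le_one {A : H →L[ℂ] H} {c : ℝ} (hc : 0 < c) (h : A ≤ (c : ℂ) • 1) :
    ((c⁻¹ : ℝ) : ℂ) • A ≤ 1 := by
  rw [← sub_nonneg]
  have h2 : (0:H →L[ℂ] H) ≤ ((c⁻¹ : ℝ) : ℂ) • ((c : ℂ) • 1 - A) :=
    eff_nonneg (sub_nonneg.2 h) (inv_nonneg.2 hc.le)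
  have h3 : ((c⁻¹ : ℝ) : ℂ) • ((c : ℂ) • (1:H →L[ℂ] H) - A)
      = 1 - ((c⁻¹ : ℝ) : ℂ) • A := by
    rw [smul_sub, smul_smul]
    norm_cast
    rw [inv_mul_cancel₀ hc.ne']
    norm_num
  rwa [h3] at h2


variable {X : Type*} [AddCommGroup X] [Module ℂ X]
variable {φ : (H →L[ℂ] H) → X}

private def Haff (φ : (H →L[ℂ] H) → X) : Prop :=
  ∀ A : H →L[ℂ] H, 0 ≤ A → A ≤ 1 → ∀ B : H →L[ℂ] H, 0 ≤ B → B ≤ 1 →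
      ∀ t : ℝ, t ∈ Set.Icc (0 : ℝ) 1 →
      φ ((t : ℂ) • A + ((1 - t : ℝ) : ℂ) • B) = (t : ℂ) • φ A + ((1 - t : ℝ) : ℂ) • φ B

private lemma key_scale (haff : Haff φ) (h0 : φ 0 = 0) {A : H →L[ℂ] H}
    (hA0 : 0 ≤ A) (hA1 : A ≤ 1) {t : ℝ} (ht : t ∈ Set.Icc (0:ℝ) 1) :
    φ ((t : ℂ) • A) = (t : ℂ) • φ A := by
  have := haff A hA0 hA1 0 le_rfl zero_le_one t ht
  simpa [h0] using this

private lemma key_add (haff : Haff φ) (h0 : φ 0 = 0) {A B : H →L[ℂ] H}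
    (hA0 : 0 ≤ A) (hB0 : 0 ≤ B) (hAB : A + B ≤ 1) :
    φ (A + B) = φ A + φ B := by
  have hA1 : A ≤ 1 := le_trans (le_add_of_nonneg_right hB0) hAB
  have hB1 : B ≤ 1 := le_trans (le_add_of_nonneg_left hA0) hAB
  have hAB0 : 0 ≤ A + B := add_nonneg hA0 hB0
  have h1 := haff A hA0 hA1 B hB0 hB1 (1/2) (by norm_num)
  have h2 := key_scale haff h0 hAB0 hAB (t := 1/2) (by norm_num)
  have h3 : ((1/2 : ℝ) : ℂ) • (A + B) = ((1/2:ℝ):ℂ) • A + ((1 - 1/2 : ℝ):ℂ) • B := by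
    rw [smul_add]; norm_num
  rw [h3, h1] at h2
  have h4 : ((1/2:ℝ):ℂ) • φ A + ((1 - 1/2:ℝ):ℂ) • φ B = ((1/2:ℝ):ℂ) • (φ A + φ B) := by
    rw [smul_add]; norm_num
  rw [h4] at h2
  have : ((1/2:ℝ):ℂ) ≠ 0 := by norm_num
  exact smul_right_injective X this h2.symm

private noncomputable def pAux (φ : (H →L[ℂ] H) → X) (A : H →L[ℂ] H) : X :=
  ((‖A‖ + 1 : ℝ) : ℂ) • φ ((((‖A‖ + 1 : ℝ)⁻¹ : ℝ) : ℂ) • A)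

/-- two valid scalings agree, monotone version -/
private lemma scale_mono (haff : Haff φ) (h0 : φ 0 = 0) {A : H →L[ℂ] H} (hA : 0 ≤ A)
    {s t : ℝ} (hs : 0 < s) (hst : s ≤ t) (hAs : A ≤ (s : ℂ) • 1) :
    ((t : ℝ) : ℂ) • φ (((t⁻¹ : ℝ) : ℂ) • A) = ((s : ℝ) : ℂ) • φ (((s⁻¹ : ℝ) : ℂ) • A) := by
  have ht : 0 < t := lt_of_lt_of_le hs hst
  have heff0 : 0 ≤ ((s⁻¹ : ℝ) : ℂ) • A := eff_nonneg hA (inv_nonneg.2 hs.le)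
  have heff1 : ((s⁻¹ : ℝ) : ℂ) • A ≤ 1 := eff_le_one hs hAs
  have hr : (s/t : ℝ) ∈ Set.Icc (0:ℝ) 1 :=
    ⟨by positivity, by rw [div_le_one ht]; exact hst⟩
  have hcomp : ((t⁻¹ : ℝ) : ℂ) • A = ((s/t : ℝ) : ℂ) • (((s⁻¹ : ℝ) : ℂ) • A) := by
    rw [smul_smul]
    norm_cast
    rw [div_mul_eq_mul_div, mul_inv_cancel₀ hs.ne']
    norm_num
  rw [hcomp, key_scale haff h0 heff0 heff1 hr, smul_smul]
  norm_cast
  have hts : t * (s / t) = s := by field_simp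
  rw [hts]

private lemma pAux_eq (haff : Haff φ) (h0 : φ 0 = 0) {A : H →L[ℂ] H} (hA : 0 ≤ A)
    {c : ℝ} (hc : 0 < c) (hAc : A ≤ (c : ℂ) • 1) :
    pAux φ A = ((c : ℝ) : ℂ) • φ (((c⁻¹ : ℝ) : ℂ) • A) := by
  set d : ℝ := ‖A‖ + 1 with hd
  have hd0 : 0 < d := by positivity
  have hAd : A ≤ (d : ℂ) • 1 := sa_le_smul_one hA.isSelfAdjoint (by simp [hd])
  set m : ℝ := min c d with hm
  have hm0 : 0 < m := lt_min hc hd0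
  have hAm : A ≤ (m : ℂ) • 1 := by
    rcases le_total c d with h | h
    · rw [hm, min_eq_left h]; exact hAc
    · rw [hm, min_eq_right h]; exact hAd
  have e1 := scale_mono haff h0 hA hm0 (min_le_left c d) hAm
  have e2 := scale_mono haff h0 hA hm0 (min_le_right c d) hAm
  rw [pAux, ← hd, e2, ← e1]

private lemma pAux_zero (h0 : φ 0 = 0) : pAux φ 0 = (0 : X) := by
  simp [pAux, h0]


private lemma pAux_add (haff : Haff φ) (h0 : φ 0 = 0) {A B : H →L[ℂ] H}
    (hA : 0 ≤ A) (hB : 0 ≤ B) : pAux φ (A + B) = pAux φ A + pAux φ B := by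
  set c : ℝ := ‖A‖ + ‖B‖ + 1 with hc
  have hc0 : 0 < c := by positivity
  have hAc : A ≤ (c : ℂ) • 1 := sa_le_smul_one hA.isSelfAdjoint
    (by rw [hc]; have := norm_nonneg B; linarith)
  have hBc : B ≤ (c : ℂ) • 1 := sa_le_smul_one hB.isSelfAdjoint
    (by rw [hc]; have := norm_nonneg A; linarith)
  have hABc : A + B ≤ (c : ℂ) • 1 := sa_le_smul_one (hA.isSelfAdjoint.add hB.isSelfAdjoint)
    (by rw [hc]; exact le_trans (norm_add_le A B) (by linarith))
  have hsum : ((c⁻¹ : ℝ) : ℂ) • (A + B) = ((c⁻¹ : ℝ) : ℂ) • A + ((c⁻¹ : ℝ) : ℂ) • B :=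
    smul_add _ _ _
  have hφ : φ (((c⁻¹ : ℝ) : ℂ) • (A + B))
      = φ (((c⁻¹ : ℝ) : ℂ) • A) + φ (((c⁻¹ : ℝ) : ℂ) • B) := by
    rw [hsum]
    refine key_add haff h0 (eff_nonneg hA (by positivity)) (eff_nonneg hB (by positivity)) ?_
    rw [← hsum]
    exact eff_le_one hc0 hABc
  rw [pAux_eq haff h0 (add_nonneg hA hB) hc0 hABc, hφ, smul_add,
    ← pAux_eq haff h0 hA hc0 hAc, ← pAux_eq haff h0 hB hc0 hBc]

private lemma pAux_smul (haff : Haff φ) (h0 : φ 0 = 0) {A : H →L[ℂ] H} (hA : 0 ≤ A)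
    {r : ℝ} (hr : 0 ≤ r) : pAux φ ((r : ℂ) • A) = (r : ℂ) • pAux φ A := by
  rcases hr.lt_or_eq with hr0 | rfl
  swap
  · simp [pAux_zero h0]
  set c : ℝ := ‖A‖ + 1 with hc
  have hc0 : 0 < c := by positivity
  have hAc : A ≤ (c : ℂ) • 1 := sa_le_smul_one hA.isSelfAdjoint (by simp [hc])
  have hrA : 0 ≤ (r : ℂ) • A := eff_nonneg hA hr
  have hrc0 : 0 < r * c := by positivity
  have hrAc : (r : ℂ) • A ≤ ((r * c : ℝ) : ℂ) • 1 := by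
    rw [← sub_nonneg]
    have : ((r * c : ℝ) : ℂ) • (1:H →L[ℂ] H) - (r : ℂ) • A = (r : ℂ) • ((c:ℂ) • 1 - A) := by
      rw [smul_sub, smul_smul]; norm_cast
    rw [this]
    exact eff_nonneg (sub_nonneg.2 hAc) hr
  have hinv : (((r * c)⁻¹ : ℝ) : ℂ) • ((r : ℂ) • A) = ((c⁻¹ : ℝ) : ℂ) • A := by
    rw [smul_smul]
    norm_cast
    rw [mul_inv, mul_comm r⁻¹, mul_assoc, inv_mul_cancel₀ hr0.ne', mul_one]
  rw [pAux_eq haff h0 hrA hrc0 hrAc, hinv, pAux_eq haff h0 hA hc0 hAc, smul_smul]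
  norm_cast

/-- value of the selfadjoint extension on differences of positives -/
private lemma q_spec (haff : Haff φ) (h0 : φ 0 = 0) {A P Q P' Q' : H →L[ℂ] H}
    (hP : 0 ≤ P) (hQ : 0 ≤ Q) (hP' : 0 ≤ P') (hQ' : 0 ≤ Q')
    (h1 : A = P - Q) (h2 : A = P' - Q') :
    pAux φ P - pAux φ Q = pAux φ P' - pAux φ Q' := by
  have hsum : P + Q' = P' + Q := by
    have := h1.symm.trans h2
    rw [sub_eq_sub_iff_add_eq_add] at this
    exact this
  have e : pAux φ P + pAux φ Q' = pAux φ P' + pAux φ Q := by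
    rw [← pAux_add haff h0 hP hQ', ← pAux_add haff h0 hP' hQ, hsum]
  exact sub_eq_sub_iff_add_eq_add.2 e

private noncomputable def qAux (φ : (H →L[ℂ] H) → X) (A : H →L[ℂ] H) : X :=
  pAux φ (A + ((‖A‖ : ℝ) : ℂ) • 1) - pAux φ (((‖A‖ : ℝ) : ℂ) • 1)

private lemma sa_decomp {A : H →L[ℂ] H} (hA : IsSelfAdjoint A) :
    0 ≤ A + ((‖A‖ : ℝ) : ℂ) • 1 ∧ A = (A + ((‖A‖ : ℝ) : ℂ) • 1) - ((‖A‖ : ℝ) : ℂ) • 1 := by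
  constructor
  · have h := hA.neg_algebraMap_norm_le_self
    have hcast : algebraMap ℝ (H →L[ℂ] H) ‖A‖ = ((‖A‖ : ℝ) : ℂ) • 1 := by
      rw [Algebra.algebraMap_eq_smul_one]; norm_cast
    rw [hcast, neg_le_iff_add_nonneg] at h
    exact h
  · abel

private lemma qAux_spec (haff : Haff φ) (h0 : φ 0 = 0) {A P Q : H →L[ℂ] H}
    (hsa : IsSelfAdjoint A) (hP : 0 ≤ P) (hQ : 0 ≤ Q) (hPQ : A = P - Q) :
    qAux φ A = pAux φ P - pAux φ Q := by
  obtain ⟨hpos, hdec⟩ := sa_decomp hsa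
  exact q_spec haff h0 hpos (smul_one_nonneg (norm_nonneg A)) hP hQ hdec hPQ


private lemma qAux_add (haff : Haff φ) (h0 : φ 0 = 0) {A B : H →L[ℂ] H}
    (hA : IsSelfAdjoint A) (hB : IsSelfAdjoint B) :
    qAux φ (A + B) = qAux φ A + qAux φ B := by
  obtain ⟨hApos, hAdec⟩ := sa_decomp hA
  obtain ⟨hBpos, hBdec⟩ := sa_decomp hB
  have hsa : IsSelfAdjoint (A + B) := hA.add hB
  have hkey := qAux_spec haff h0 hsa (add_nonneg hApos hBpos)
    (add_nonneg (smul_one_nonneg (norm_nonneg A)) (smul_one_nonneg (norm_nonneg B)))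
    (by rw [hAdec.symm.symm]; nth_rewrite 1 [hAdec]; nth_rewrite 1 [hBdec]; abel)
  rw [hkey,
    pAux_add haff h0 hApos hBpos,
    pAux_add haff h0 (smul_one_nonneg (norm_nonneg A)) (smul_one_nonneg (norm_nonneg B)),
    qAux, qAux]
  abel

private lemma qAux_smul (haff : Haff φ) (h0 : φ 0 = 0) {A : H →L[ℂ] H}
    (hA : IsSelfAdjoint A) (r : ℝ) :
    qAux φ ((r : ℂ) • A) = (r : ℂ) • qAux φ A := by
  obtain ⟨hApos, hAdec⟩ := sa_decomp hA
  have hQpos : (0:H →L[ℂ] H) ≤ ((‖A‖ : ℝ) : ℂ) • 1 := smul_one_nonneg (norm_nonneg A)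
  have hqA : qAux φ A = pAux φ (A + ((‖A‖ : ℝ) : ℂ) • 1) - pAux φ (((‖A‖ : ℝ) : ℂ) • 1) := rfl
  have hrsa : IsSelfAdjoint ((r : ℂ) • A) := by
    rw [IsSelfAdjoint, star_smul, hA.star_eq]
    norm_num
  rcases le_or_gt 0 r with hr | hr
  · have hdec : (r : ℂ) • A = (r : ℂ) • (A + ((‖A‖ : ℝ) : ℂ) • 1) - (r : ℂ) • (((‖A‖ : ℝ) : ℂ) • 1) := by
      rw [smul_add]; abel
    rw [qAux_spec haff h0 hrsa (eff_nonneg hApos hr) (eff_nonneg hQpos hr) hdec,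
      pAux_smul haff h0 hApos hr, pAux_smul haff h0 hQpos hr, hqA, smul_sub]
  · have hr' : (0:ℝ) ≤ -r := by linarith
    have hdec : (r : ℂ) • A = ((-r : ℝ) : ℂ) • (((‖A‖ : ℝ) : ℂ) • 1) - ((-r : ℝ) : ℂ) • (A + ((‖A‖ : ℝ) : ℂ) • 1) := by
      push_cast
      rw [smul_add]
      module
    rw [qAux_spec haff h0 hrsa (eff_nonneg hQpos hr') (eff_nonneg hApos hr') hdec,
      pAux_smul haff h0 hQpos hr', pAux_smul haff h0 hApos hr', hqA]
    push_cast
    module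

private lemma qAux_zero (haff : Haff φ) (h0 : φ 0 = 0) : qAux φ (0 : H →L[ℂ] H) = 0 := by
  have := qAux_spec haff h0 (A := 0) (P := 0) (Q := 0)
    (IsSelfAdjoint.zero _) le_rfl  le_rfl (by abel)
  rw [this, sub_self]

private lemma qAux_eff (haff : Haff φ) (h0 : φ 0 = 0) {A : H →L[ℂ] H}
    (hA0 : 0 ≤ A) (hA1 : A ≤ 1) : qAux φ A = φ A := by
  have h1 := qAux_spec haff h0 hA0.isSelfAdjoint hA0 le_rfl (by abel)
  rw [h1, pAux_zero h0, sub_zero]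
  have h2 : A ≤ ((1 : ℝ) : ℂ) • 1 := by norm_num; exact hA1
  rw [pAux_eq haff h0 hA0 one_pos h2]
  norm_num


private lemma sa_real_smul {A : H →L[ℂ] H} (hA : IsSelfAdjoint A) (r : ℝ) :
    IsSelfAdjoint ((r : ℂ) • A) := by
  rw [IsSelfAdjoint, star_smul, hA.star_eq]
  norm_num

private noncomputable def ReA (A : H →L[ℂ] H) : H →L[ℂ] H := (2⁻¹ : ℂ) • (A + star A)
private noncomputable def ImA (A : H →L[ℂ] H) : H →L[ℂ] H :=
  (-(Complex.I) / 2) • (A - star A)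

private lemma ReA_sa (A : H →L[ℂ] H) : IsSelfAdjoint (ReA A) := by
  rw [IsSelfAdjoint, ReA, star_smul, star_add, star_star]
  rw [show star (2⁻¹ : ℂ) = 2⁻¹ by simp]
  rw [add_comm]

private lemma ImA_sa (A : H →L[ℂ] H) : IsSelfAdjoint (ImA A) := by
  rw [IsSelfAdjoint, ImA, star_smul, star_sub, star_star]
  rw [show star (-(Complex.I) / 2 : ℂ) = Complex.I / 2 by simp [div_eq_mul_inv]]
  module

private lemma ReA_add (A B : H →L[ℂ] H) : ReA (A + B) = ReA A + ReA B := by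
  simp only [ReA, star_add]; module

private lemma ImA_add (A B : H →L[ℂ] H) : ImA (A + B) = ImA A + ImA B := by
  simp only [ImA, star_add]; module

private lemma ReA_smul (c : ℂ) (A : H →L[ℂ] H) :
    ReA (c • A) = ((c.re : ℝ) : ℂ) • ReA A + ((-c.im : ℝ) : ℂ) • ImA A := by
  simp only [ReA, ImA, star_smul]
  rw [show star c = (c.re : ℂ) - (c.im : ℂ) * Complex.I from Complex.ext (by simp) (by simp)]
  nth_rewrite 1 [show c = (c.re : ℂ) + (c.im : ℂ) * Complex.I from (Complex.re_add_im c).symm]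
  push_cast
  match_scalars
  all_goals (ring_nf; try simp only [Complex.I_sq, Complex.I_mul_I]); try ring
  all_goals norm_num [Complex.ext_iff]

private lemma ImA_smul (c : ℂ) (A : H →L[ℂ] H) :
    ImA (c • A) = ((c.im : ℝ) : ℂ) • ReA A + ((c.re : ℝ) : ℂ) • ImA A := by
  simp only [ReA, ImA, star_smul]
  rw [show star c = (c.re : ℂ) - (c.im : ℂ) * Complex.I from Complex.ext (by simp) (by simp)]
  nth_rewrite 1 [show c = (c.re : ℂ) + (c.im : ℂ) * Complex.I from (Complex.re_add_im c).symm]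
  push_cast
  match_scalars
  all_goals (ring_nf; try simp only [Complex.I_sq, Complex.I_mul_I]); try ring
  all_goals norm_num [Complex.ext_iff]

private lemma ReA_of_sa {A : H →L[ℂ] H} (hA : IsSelfAdjoint A) : ReA A = A := by
  rw [ReA, hA.star_eq]
  module

private lemma ImA_of_sa {A : H →L[ℂ] H} (hA : IsSelfAdjoint A) : ImA A = 0 := by
  rw [ImA, hA.star_eq]
  module

private noncomputable def PhiAux (φ : (H →L[ℂ] H) → X) (A : H →L[ℂ] H) : X :=
  qAux φ (ReA A) + Complex.I • qAux φ (ImA A)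

private lemma PhiAux_add (haff : Haff φ) (h0 : φ 0 = 0) (A B : H →L[ℂ] H) :
    PhiAux φ (A + B) = PhiAux φ A + PhiAux φ B := by
  rw [PhiAux, PhiAux, PhiAux, ReA_add, ImA_add,
    qAux_add haff h0 (ReA_sa A) (ReA_sa B), qAux_add haff h0 (ImA_sa A) (ImA_sa B),
    smul_add]
  abel

private lemma PhiAux_smul (haff : Haff φ) (h0 : φ 0 = 0) (c : ℂ) (A : H →L[ℂ] H) :
    PhiAux φ (c • A) = c • PhiAux φ A := by
  have hR := ReA_sa A
  have hI := ImA_sa A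
  rw [PhiAux, PhiAux, ReA_smul, ImA_smul,
    qAux_add haff h0 (sa_real_smul hR _) (sa_real_smul hI _),
    qAux_add haff h0 (sa_real_smul hR _) (sa_real_smul hI _),
    qAux_smul haff h0 hR, qAux_smul haff h0 hI,
    qAux_smul haff h0 hR, qAux_smul haff h0 hI]
  nth_rewrite 5 [show c = (c.re : ℂ) + (c.im : ℂ) * Complex.I from (Complex.re_add_im c).symm]
  push_cast
  match_scalars
  all_goals (ring_nf; try simp only [Complex.I_sq, Complex.I_mul_I]); try ring
  all_goals norm_num [Complex.ext_iff]


private lemma PhiAux_eff (haff : Haff φ) (h0 : φ 0 = 0) {A : H →L[ℂ] H}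
    (hA0 : 0 ≤ A) (hA1 : A ≤ 1) : PhiAux φ A = φ A := by
  rw [PhiAux, ReA_of_sa hA0.isSelfAdjoint, ImA_of_sa hA0.isSelfAdjoint,
    qAux_zero haff h0, qAux_eff haff h0 hA0 hA1, smul_zero, add_zero]

/-- any linear map agreeing with φ on effects is determined on positives -/
private lemma lin_pos_val (Ψ : (H →L[ℂ] H) →ₗ[ℂ] X)
    (hΨ : ∀ A : H →L[ℂ] H, 0 ≤ A → A ≤ 1 → Ψ A = φ A)
    {A : H →L[ℂ] H} (hA : 0 ≤ A) :
    Ψ A = ((‖A‖ + 1 : ℝ) : ℂ) • φ ((((‖A‖ + 1 : ℝ)⁻¹ : ℝ) : ℂ) • A) := by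
  set c : ℝ := ‖A‖ + 1 with hc
  have hc0 : 0 < c := by positivity
  have hAc : A ≤ (c : ℂ) • 1 := sa_le_smul_one hA.isSelfAdjoint (by simp [hc])
  have heff0 : 0 ≤ ((c⁻¹ : ℝ) : ℂ) • A := eff_nonneg hA (by positivity)
  have heff1 : ((c⁻¹ : ℝ) : ℂ) • A ≤ 1 := eff_le_one hc0 hAc
  have hback : ((c : ℝ) : ℂ) • (((c⁻¹ : ℝ) : ℂ) • A) = A := by
    rw [smul_smul]
    norm_cast
    rw [mul_inv_cancel₀ hc0.ne', one_smul]
  calc Ψ A = Ψ (((c : ℝ) : ℂ) • (((c⁻¹ : ℝ) : ℂ) • A)) := by rw [hback]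
  _ = ((c : ℝ) : ℂ) • Ψ (((c⁻¹ : ℝ) : ℂ) • A) := map_smul Ψ _ _
  _ = ((c : ℝ) : ℂ) • φ (((c⁻¹ : ℝ) : ℂ) • A) := by rw [hΨ _ heff0 heff1]

end Aux

/-- An affine map from the Hilbert space effect algebra `[0, I]` into a complex vector space
sending `0` to `0` has a unique linear extension to all of `B(H)`. -/
theorem unique_linear_extension_of_affine_on_effects
    {H : Type*} [NormedAddCommGroup H] [InnerProductSpace ℂ H] [CompleteSpace H]
    (X : Type*) [AddCommGroup X] [Module ℂ X]
    (φ : (H →L[ℂ] H) → X)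
    (haff : ∀ A : H →L[ℂ] H, 0 ≤ A → A ≤ 1 → ∀ B : H →L[ℂ] H, 0 ≤ B → B ≤ 1 →
      ∀ t : ℝ, t ∈ Set.Icc (0 : ℝ) 1 →
      φ ((t : ℂ) • A + ((1 - t : ℝ) : ℂ) • B) = (t : ℂ) • φ A + ((1 - t : ℝ) : ℂ) • φ B)
    (h0 : φ 0 = 0) :
    ∃! Φ : (H →L[ℂ] H) →ₗ[ℂ] X, ∀ A : H →L[ℂ] H, 0 ≤ A → A ≤ 1 → Φ A = φ A := by
  have haff' : Haff φ := haff
  let Φ₀ : (H →L[ℂ] H) →ₗ[ℂ] X :=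
    { toFun := PhiAux φ
      map_add' := PhiAux_add haff' h0
      map_smul' := PhiAux_smul haff' h0 }
  have hΦ₀ : ∀ A : H →L[ℂ] H, 0 ≤ A → A ≤ 1 → Φ₀ A = φ A := fun A hA0 hA1 =>
    PhiAux_eff haff' h0 hA0 hA1
  refine ⟨Φ₀, hΦ₀, ?_⟩
  intro Ψ hΨ
  refine LinearMap.ext_on (CStarAlgebra.span_nonneg (A := H →L[ℂ] H)) ?_
  intro x hx
  rw [lin_pos_val Ψ hΨ hx]
  exact (lin_pos_val Φ₀ hΦ₀ hx).symm
end

section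
/- Let H be a complex Hilbert space and let [0,I] be the set of effects on H. Every affine map φ : [0,I] → [0,I] is continuous with respect to the operator norm topology. -/
set_option maxHeartbeats 1000000 in
lemma aux_smul_nonneg' {H : Type*} [NormedAddCommGroup H] [InnerProductSpace ℂ H]
    [CompleteSpace H] {r : ℝ} (hr : 0 ≤ r) {X : H →L[ℂ] H} (hX : 0 ≤ X) :
    0 ≤ (r : ℂ) • X := by
  have key := star_left_conjugate_nonneg hX (((Real.sqrt r : ℝ) : ℂ) • (1 : H →L[ℂ] H))
  have : star ((((Real.sqrt r : ℝ) : ℂ)) • (1 : H →L[ℂ] H)) * X *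
      ((((Real.sqrt r : ℝ) : ℂ)) • (1 : H →L[ℂ] H)) = (r : ℂ) • X := by
    rw [star_smul, star_one, Complex.star_def, Complex.conj_ofReal]
    rw [smul_mul_assoc, mul_smul_comm, one_mul, mul_one, smul_smul,
      ← Complex.ofReal_mul, Real.mul_self_sqrt hr]
  rwa [this] at key

set_option maxHeartbeats 1000000 in
lemma aux_norm_posPart_le' {H : Type*} [NormedAddCommGroup H] [InnerProductSpace ℂ H]
    [CompleteSpace H] (a : H →L[ℂ] H) (ha : IsSelfAdjoint a) : ‖a⁺‖ ≤ ‖a‖ := by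
  rcases subsingleton_or_nontrivial H with hH | hH
  · simp [Subsingleton.elim (a⁺) 0, Subsingleton.elim a 0]
  · rw [CFC.posPart_def]
    refine norm_cfcₙ_le fun x hx => ?_
    rw [quasispectrum_eq_spectrum_union_zero] at hx
    rcases hx with hx | hx
    · calc ‖x⁺‖ ≤ ‖x‖ := by
            rw [Real.norm_eq_abs, Real.norm_eq_abs, abs_of_nonneg (posPart_nonneg x),
              _root_.posPart_def]
            exact sup_le (le_abs_self x) (abs_nonneg x)
        _ ≤ ‖a‖ := spectrum.norm_le_norm_of_mem hx
    · simp_all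

set_option maxHeartbeats 1000000 in
/-- Every affine map of the Hilbert space effect algebra `[0, I]` into itself is continuous
with respect to the operator norm topology. -/
theorem affine_map_of_effects_continuous
    {H : Type*} [NormedAddCommGroup H] [InnerProductSpace ℂ H] [CompleteSpace H]
    (φ : (H →L[ℂ] H) → (H →L[ℂ] H))
    (hmaps : ∀ A : H →L[ℂ] H, 0 ≤ A → A ≤ 1 → 0 ≤ φ A ∧ φ A ≤ 1)
    (haff : ∀ A : H →L[ℂ] H, 0 ≤ A → A ≤ 1 → ∀ B : H →L[ℂ] H, 0 ≤ B → B ≤ 1 →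
      ∀ t : ℝ, t ∈ Set.Icc (0 : ℝ) 1 →
      φ ((t : ℂ) • A + ((1 - t : ℝ) : ℂ) • B) = (t : ℂ) • φ A + ((1 - t : ℝ) : ℂ) • φ B) :
    ContinuousOn φ {A : H →L[ℂ] H | 0 ≤ A ∧ A ≤ 1} := by
  have h01 : (0 : H →L[ℂ] H) ≤ 1 := by
    rw [ContinuousLinearMap.nonneg_iff_isPositive]
    exact ContinuousLinearMap.isPositive_one
  -- effects have norm at most one
  have hnorm1 : ∀ C : H →L[ℂ] H, 0 ≤ C → C ≤ 1 → ‖C‖ ≤ 1 := fun C h0 h1 =>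
    (CStarAlgebra.norm_le_one_iff_of_nonneg C h0).mpr h1
  have key : ∀ A : H →L[ℂ] H, 0 ≤ A → A ≤ 1 → ∀ B : H →L[ℂ] H, 0 ≤ B → B ≤ 1 →
      ‖φ A - φ B‖ ≤ 2 * ‖A - B‖ := by
    intro A hA0 hA1 B hB0 hB1
    rcases eq_or_ne A B with rfl | hne
    · simp
    set d : ℝ := ‖A - B‖ with hd
    have hdpos : 0 < d := by
      rw [hd]
      exact norm_pos_iff.mpr (sub_ne_zero.mpr hne)
    rcases lt_or_ge 1 d with hd1 | hd1
    · -- trivial bound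
      have n1 : ‖φ A‖ ≤ 1 := hnorm1 _ (hmaps A hA0 hA1).1 (hmaps A hA0 hA1).2
      have n2 : ‖φ B‖ ≤ 1 := hnorm1 _ (hmaps B hB0 hB1).1 (hmaps B hB0 hB1).2
      calc ‖φ A - φ B‖ ≤ ‖φ A‖ + ‖φ B‖ := norm_sub_le _ _
        _ ≤ 2 * d := by linarith
    · -- main case : d ≤ 1
      have hsa : IsSelfAdjoint (A - B) :=
        (IsSelfAdjoint.of_nonneg hA0).sub (IsSelfAdjoint.of_nonneg hB0)
      set X : H →L[ℂ] H := (A - B)⁺ with hXdef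
      set Y : H →L[ℂ] H := (A - B)⁻ with hYdef
      have hX0 : 0 ≤ X := CFC.posPart_nonneg _
      have hY0 : 0 ≤ Y := CFC.negPart_nonneg _
      have hXn : ‖X‖ ≤ d := aux_norm_posPart_le' _ hsa
      have hYn : ‖Y‖ ≤ d := by
        have := aux_norm_posPart_le' (-(A - B)) hsa.neg
        rw [CFC.posPart_neg] at this
        rwa [norm_neg] at this
      have hX1 : X ≤ 1 := (CStarAlgebra.norm_le_one_iff_of_nonneg X hX0).mp (hXn.trans hd1)
      have hY1 : Y ≤ 1 := (CStarAlgebra.norm_le_one_iff_of_nonneg Y hY0).mp (hYn.trans hd1)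
      have hXY : X - Y = A - B := CFC.posPart_sub_negPart _ hsa
      -- step 1 : φ A - φ B = φ X - φ Y
      have half : (1/2 : ℝ) ∈ Set.Icc (0:ℝ) 1 := by norm_num
      have hc : (((1 : ℝ) - 1/2 : ℝ) : ℂ) = (((1/2 : ℝ)) : ℂ) := by norm_num
      have e1 := haff A hA0 hA1 Y hY0 hY1 (1/2) half
      have e2 := haff B hB0 hB1 X hX0 hX1 (1/2) half
      rw [hc] at e1 e2
      have hmid : (((1/2:ℝ)) : ℂ) • A + (((1/2:ℝ)) : ℂ) • Y
          = (((1/2:ℝ)) : ℂ) • B + (((1/2:ℝ)) : ℂ) • X := by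
        rw [← smul_add, ← smul_add]
        congr 1
        have h := sub_eq_sub_iff_add_eq_add.mp hXY
        exact h.symm.trans (add_comm X B)
      rw [hmid, e2] at e1
      have step1 : φ A - φ B = φ X - φ Y := by
        rw [sub_eq_sub_iff_add_eq_add]
        have : (((1/2:ℝ)) : ℂ) • (φ A + φ Y) = (((1/2:ℝ)) : ℂ) • (φ B + φ X) := by
          rw [smul_add, smul_add]
          exact e1.symm
        have h2 := smul_right_injective (H →L[ℂ] H)
          (by norm_num : (((1/2:ℝ)) : ℂ) ≠ 0) this
        rw [h2]
        abel
      -- step 2 : bound ‖φ X - φ Y‖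
      set X' : H →L[ℂ] H := ((d⁻¹ : ℝ) : ℂ) • X with hX'def
      set Y' : H →L[ℂ] H := ((d⁻¹ : ℝ) : ℂ) • Y with hY'def
      have hX'0 : 0 ≤ X' := aux_smul_nonneg' (inv_nonneg.mpr hdpos.le) hX0
      have hY'0 : 0 ≤ Y' := aux_smul_nonneg' (inv_nonneg.mpr hdpos.le) hY0
      have hnormsmul : ∀ Z : H →L[ℂ] H, ‖Z‖ ≤ d → ‖((d⁻¹ : ℝ) : ℂ) • Z‖ ≤ 1 := by
        intro Z hZ
        rw [norm_smul, Complex.norm_real, Real.norm_eq_abs,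
          abs_of_nonneg (inv_nonneg.mpr hdpos.le)]
        calc d⁻¹ * ‖Z‖ ≤ d⁻¹ * d := by
              exact mul_le_mul_of_nonneg_left hZ (inv_nonneg.mpr hdpos.le)
          _ = 1 := inv_mul_cancel₀ hdpos.ne'
      have hX'1 : X' ≤ 1 := (CStarAlgebra.norm_le_one_iff_of_nonneg X' hX'0).mp
        (hnormsmul X hXn)
      have hY'1 : Y' ≤ 1 := (CStarAlgebra.norm_le_one_iff_of_nonneg Y' hY'0).mp
        (hnormsmul Y hYn)
      have hdIcc : d ∈ Set.Icc (0:ℝ) 1 := ⟨hdpos.le, hd1⟩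
      have smul_back : ∀ Z : H →L[ℂ] H,
          (d : ℂ) • (((d⁻¹ : ℝ) : ℂ) • Z) + ((1 - d : ℝ) : ℂ) • (0 : H →L[ℂ] H) = Z := by
        intro Z
        rw [smul_zero, add_zero, smul_smul, ← Complex.ofReal_mul,
          mul_inv_cancel₀ hdpos.ne', Complex.ofReal_one, one_smul]
      have e3 := haff X' hX'0 hX'1 0 le_rfl h01 d hdIcc
      have e4 := haff Y' hY'0 hY'1 0 le_rfl h01 d hdIcc
      rw [hX'def] at e3
      rw [hY'def] at e4
      rw [smul_back X] at e3
      rw [smul_back Y] at e4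
      have step2 : φ X - φ Y = (d : ℂ) • (φ X' - φ Y') := by
        rw [e3, e4, smul_sub]
        abel
      rw [step1, step2, norm_smul, Complex.norm_real, Real.norm_eq_abs,
        abs_of_nonneg hdpos.le]
      have n1 : ‖φ X'‖ ≤ 1 := hnorm1 _ (hmaps X' hX'0 hX'1).1 (hmaps X' hX'0 hX'1).2
      have n2 : ‖φ Y'‖ ≤ 1 := hnorm1 _ (hmaps Y' hY'0 hY'1).1 (hmaps Y' hY'0 hY'1).2
      have : ‖φ X' - φ Y'‖ ≤ 2 := by
        calc ‖φ X' - φ Y'‖ ≤ ‖φ X'‖ + ‖φ Y'‖ := norm_sub_le _ _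
          _ ≤ 2 := by linarith
      calc d * ‖φ X' - φ Y'‖ ≤ d * 2 := mul_le_mul_of_nonneg_left this hdpos.le
        _ = 2 * d := mul_comm _ _
  refine (LipschitzOnWith.of_dist_le_mul (K := 2) ?_).continuousOn
  intro x hx y hy
  rw [dist_eq_norm, dist_eq_norm]
  simpa using key x hx.1 hx.2 y hy.1 hy.2
end

section
/- Let A be a von Neumann algebra on a complex Hilbert space H which is a factor, and let E(A) = {X ∈ A : 0 ≤ X ≤ I} be its set of effects. If φ : E(A) → E(A) is a bijective affine map, then either φ(0) = 0 or φ(0) = I. -/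
/-!
Write `P = φ 0`. An affine bijection of the convex set `E` preserves extreme points and, through
midpoints, the relation `a + b = p + q`. Hence `P` is an extreme effect, i.e. a projection, and `φ`
carries the transitive relation `y - x ∈ E` to the relation `v - u + P ∈ E`, which is therefore
transitive as well. If `P * e * (1 - P) ≠ 0` for some `e ∈ 𝓐`, a rescaling `c` of this corner
yields effects, with block matrices `!![a, t c; t c⋆, b]` with respect to `P`, that violate this
transitivity, because such a block matrix is positive exactly when `t² ‖c‖² ≤ a b`. So `P` commutes
with `𝓐`, and a central projection of a factor is `0` or `1`.
-/

open Set

section AffineBijection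

variable {V : Type*} [AddCommGroup V] [Module ℝ V]

def AffineOn (E : Set V) (φ : V → V) : Prop :=
  ∀ x ∈ E, ∀ y ∈ E, ∀ t ∈ Icc (0 : ℝ) 1, φ (t • x + (1 - t) • y) = t • φ x + (1 - t) • φ y

variable {E : Set V} {φ : V → V}

namespace AffineOn

lemma map_half_smul_add (hφ : AffineOn E φ) {x y : V} (hx : x ∈ E) (hy : y ∈ E) :
    φ ((2⁻¹ : ℝ) • (x + y)) = (2⁻¹ : ℝ) • (φ x + φ y) := by
  have h := hφ x hx y hy 2⁻¹ ⟨by norm_num, by norm_num⟩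
  rwa [show (1 : ℝ) - 2⁻¹ = 2⁻¹ by norm_num, ← smul_add, ← smul_add] at h

lemma add_eq_add (hφ : AffineOn E φ) {a b p q : V} (ha : a ∈ E) (hb : b ∈ E) (hp : p ∈ E)
    (hq : q ∈ E) (h : a + b = p + q) : φ a + φ b = φ p + φ q := by
  have h2 := hφ.map_half_smul_add ha hb
  rw [h, hφ.map_half_smul_add hp hq] at h2
  exact smul_right_injective V (by norm_num) h2.symm

lemma add_eq_add_iff (hφ : AffineOn E φ) (hinj : InjOn φ E) (hE : Convex ℝ E) {a b p q : V}
    (ha : a ∈ E) (hb : b ∈ E) (hp : p ∈ E) (hq : q ∈ E) :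
    φ a + φ b = φ p + φ q ↔ a + b = p + q := by
  refine ⟨fun h => ?_, hφ.add_eq_add ha hb hp hq⟩
  have half_mem : ∀ {x y}, x ∈ E → y ∈ E → (2⁻¹ : ℝ) • (x + y) ∈ E := fun hx hy => by
    rw [smul_add]; exact hE hx hy (by norm_num) (by norm_num) (by norm_num)
  have h2 : φ ((2⁻¹ : ℝ) • (a + b)) = φ ((2⁻¹ : ℝ) • (p + q)) := by
    rw [hφ.map_half_smul_add ha hb, hφ.map_half_smul_add hp hq, h]
  exact smul_right_injective V (by norm_num) (hinj (half_mem ha hb) (half_mem hp hq) h2)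

lemma sub_mem_iff (hφ : AffineOn E φ) (hbij : BijOn φ E E) (hE : Convex ℝ E) (h0 : 0 ∈ E)
    {x y : V} (hx : x ∈ E) (hy : y ∈ E) : y - x ∈ E ↔ φ y - φ x + φ 0 ∈ E := by
  constructor
  · intro hd
    have h := hφ.add_eq_add hx hd hy h0 (by abel)
    rw [show φ y - φ x + φ 0 = φ (y - x) by rw [sub_add_eq_add_sub, ← h]; abel]
    exact hbij.mapsTo hd
  · intro hd
    obtain ⟨d, hdE, hφd⟩ := hbij.surjOn hd
    have h := (hφ.add_eq_add_iff hbij.injOn hE hx hdE hy h0).1 (by rw [hφd]; abel)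
    rwa [show y - x = d by rw [← add_zero y, ← h]; abel]

lemma sub_add_mem_trans (hφ : AffineOn E φ) (hbij : BijOn φ E E) (hE : Convex ℝ E) (h0 : 0 ∈ E)
    (htrans : ∀ x ∈ E, ∀ y ∈ E, ∀ z ∈ E, y - x ∈ E → z - y ∈ E → z - x ∈ E) :
    ∀ u ∈ E, ∀ v ∈ E, ∀ w ∈ E,
      v - u + φ 0 ∈ E → w - v + φ 0 ∈ E → w - u + φ 0 ∈ E := by
  intro u hu v hv w hw huv hvw
  obtain ⟨x, hx, rfl⟩ := hbij.surjOn hu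
  obtain ⟨y, hy, rfl⟩ := hbij.surjOn hv
  obtain ⟨z, hz, rfl⟩ := hbij.surjOn hw
  rw [← hφ.sub_mem_iff hbij hE h0 hx hy] at huv
  rw [← hφ.sub_mem_iff hbij hE h0 hy hz] at hvw
  exact (hφ.sub_mem_iff hbij hE h0 hx hz).1 (htrans x hx y hy z hz huv hvw)

lemma mapsTo_extremePoints (hφ : AffineOn E φ) (hbij : BijOn φ E E) (hE : Convex ℝ E) :
    MapsTo φ (extremePoints ℝ E) (extremePoints ℝ E) := by
  intro x hx
  rw [mem_extremePoints] at hx ⊢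
  refine ⟨hbij.mapsTo hx.1, ?_⟩
  rintro _ hy₁ _ hy₂ ⟨a, b, ha, hb, hab, hxy⟩
  obtain ⟨x₁, hx₁, rfl⟩ := hbij.surjOn hy₁
  obtain ⟨x₂, hx₂, rfl⟩ := hbij.surjOn hy₂
  obtain rfl : b = 1 - a := by linarith
  have hcomb : a • x₁ + (1 - a) • x₂ = x :=
    hbij.injOn (hE hx₁ hx₂ ha.le hb.le hab) hx.1
      (by rw [hφ x₁ hx₁ x₂ hx₂ a ⟨ha.le, by linarith⟩, hxy])
  obtain ⟨rfl, rfl⟩ := hx.2 x₁ hx₁ x₂ hx₂ ⟨a, 1 - a, ha, hb, hab, hcomb⟩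
  exact ⟨rfl, rfl⟩

end AffineOn

end AffineBijection

section StarProjection

variable {R : Type*} [Ring R] [StarRing R] {p c : R}

section OffDiagonal

variable (hp : IsStarProjection p) (hc : p * c * (1 - p) = c)
include hp hc

lemma IsStarProjection.mul_offDiag : p * c = c := by
  rw [← hc, ← mul_assoc, ← mul_assoc, hp.isIdempotentElem.eq]

lemma IsStarProjection.offDiag_mul : c * p = 0 := by
  rw [← hc, mul_assoc, sub_mul, one_mul, hp.isIdempotentElem.eq, sub_self, mul_zero]

lemma IsStarProjection.offDiag_mul_one_sub : c * (1 - p) = c := by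
  rw [mul_sub, mul_one, hp.offDiag_mul hc, sub_zero]

lemma IsStarProjection.offDiag_mul_offDiag : c * c = 0 := by
  nth_rw 2 [← hp.mul_offDiag hc]
  rw [← mul_assoc, hp.offDiag_mul hc, zero_mul]

lemma IsStarProjection.star_offDiag_mul : star c * p = star c := by
  simpa [hp.isSelfAdjoint.star_eq] using congrArg star (hp.mul_offDiag hc)

lemma IsStarProjection.mul_star_offDiag : p * star c = 0 := by
  simpa [hp.isSelfAdjoint.star_eq] using congrArg star (hp.offDiag_mul hc)

end OffDiagonal

lemma IsStarProjection.mul_corner_mul_one_sub (hp : IsStarProjection p) (x : R) :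
    p * (p * x * (1 - p)) * (1 - p) = p * x * (1 - p) := by
  rw [show p * (p * x * (1 - p)) * (1 - p) = (p * p) * x * ((1 - p) * (1 - p)) by noncomm_ring,
    hp.isIdempotentElem.eq, hp.one_sub.isIdempotentElem.eq]

lemma IsStarProjection.commute_of_mul_mul_one_sub_eq_zero (hp : IsStarProjection p) {x : R}
    (hx : p * x * (1 - p) = 0) (hx' : p * star x * (1 - p) = 0) : Commute p x := by
  have hleft : (1 - p) * x * p = 0 := by
    simpa [star_mul, hp.isSelfAdjoint.star_eq, hp.one_sub.isSelfAdjoint.star_eq, mul_assoc]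
      using congrArg star hx'
  have h1 : p * x = p * x * p := by
    rw [← sub_eq_zero, ← hx]; noncomm_ring
  have h2 : x * p = p * x * p := by
    rw [← sub_eq_zero, ← hleft]; noncomm_ring
  exact h1.trans h2.symm

end StarProjection

lemma IsIdempotentElem.eq_zero_or_eq_one_of_eq_smul_one {K R : Type*} [Field K] [Ring R]
    [Algebra K R] {p : R} (hp : IsIdempotentElem p) {γ : K} (hγ : p = γ • 1) : p = 0 ∨ p = 1 := by
  rcases subsingleton_or_nontrivial R with hR | hR
  · exact Or.inl (Subsingleton.elim _ _)
  rw [← Algebra.algebraMap_eq_smul_one] at hγ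
  subst hγ
  have hγ : IsIdempotentElem γ := (algebraMap K R).injective (by simpa using hp.eq)
  rcases IsIdempotentElem.iff_eq_zero_or_one.1 hγ with rfl | rfl <;> simp

section CStarAlgebra

variable {A : Type*} [CStarAlgebra A]

lemma StarSubalgebra.real_smul_mem (S : StarSubalgebra ℂ A) {x : A} (hx : x ∈ S) (r : ℝ) :
    r • x ∈ S := by
  simpa only [Complex.coe_smul] using S.smul_mem hx (r : ℂ)

/-- The block matrix `!![a, t • c; t • star c, b]` with respect to `1 = p + (1 - p)`, for a
projection `p` and a corner `c = p * c * (1 - p)`. -/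
noncomputable def block (p c : A) (a b t : ℝ) : A := a • p + b • (1 - p) + t • (c + star c)

lemma block_mem {S : StarSubalgebra ℂ A} {p c : A} (hp : p ∈ S) (hc : c ∈ S) (a b t : ℝ) :
    block p c a b t ∈ S :=
  add_mem (add_mem (S.real_smul_mem hp a) (S.real_smul_mem (sub_mem (one_mem S) hp) b))
    (S.real_smul_mem (add_mem hc (star_mem hc)) t)

lemma one_sub_block (p c : A) (a b t : ℝ) :
    1 - block p c a b t = block p c (1 - a) (1 - b) (-t) := by
  simp only [block]; module

lemma block_sub_block_add (p c : A) (a b t a' b' t' : ℝ) :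
    block p c a b t - block p c a' b' t' + p = block p c (a - a' + 1) (b - b') (t - t') := by
  simp only [block]; module

section Block

variable {p c : A} (hp : IsStarProjection p) (hc : p * c * (1 - p) = c)
include hp hc

lemma smul_block_eq (a b t : ℝ) :
    a • block p c a b t = star (a • p + t • c) * (a • p + t • c) +
      ((a * b) • (1 - p) - t ^ 2 • (star c * c)) := by
  simp only [block, star_add, star_smul, star_trivial, hp.isSelfAdjoint.star_eq, mul_add, add_mul,
    smul_mul_assoc, mul_smul_comm, hp.isIdempotentElem.eq, hp.mul_offDiag hc,
    hp.star_offDiag_mul hc]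
  module

lemma star_mul_block_mul (a b t : ℝ) :
    star (a • (1 - p) - t • c) * block p c a b t * (a • (1 - p) - t • c) =
      a • ((a * b) • (1 - p) - t ^ 2 • (star c * c)) := by
  simp only [block, star_sub, star_smul, star_trivial, star_one, hp.isSelfAdjoint.star_eq, mul_add,
    add_mul, mul_sub, sub_mul, smul_mul_assoc, mul_smul_comm, one_mul, mul_one, mul_assoc,
    hp.isIdempotentElem.eq, hp.mul_offDiag hc, hp.offDiag_mul hc, hp.offDiag_mul_offDiag hc,
    hp.star_offDiag_mul hc, hp.mul_star_offDiag hc, ← star_mul, zero_mul, mul_zero, smul_zero,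
    star_zero]
  module

variable [PartialOrder A] [StarOrderedRing A]

lemma star_offDiag_mul_offDiag_le : star c * c ≤ ‖c‖ ^ 2 • (1 - p) := by
  have hq := hp.one_sub
  calc star c * c = star (c * (1 - p)) * (c * (1 - p)) := by rw [hp.offDiag_mul_one_sub hc]
    _ = star (1 - p) * (star c * c) * (1 - p) := by simp only [star_mul, mul_assoc]
    _ ≤ star (1 - p) * algebraMap ℝ A (‖c‖ ^ 2) * (1 - p) :=
        star_left_conjugate_le_conjugate CStarAlgebra.star_mul_le_algebraMap_norm_sq _
    _ = ‖c‖ ^ 2 • (1 - p) := by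
        rw [Algebra.algebraMap_eq_smul_one, hq.isSelfAdjoint.star_eq, mul_smul_comm, mul_one,
          smul_mul_assoc, hq.isIdempotentElem.eq]

-- Schur complement: both directions reduce to `0 ≤ (a * b) • (1 - p) - t ^ 2 • (star c * c)`.
lemma block_nonneg_iff {a b t : ℝ} (ha : 0 < a) (hb : 0 ≤ b) :
    0 ≤ block p c a b t ↔ t ^ 2 * ‖c‖ ^ 2 ≤ a * b := by
  constructor
  · intro h
    have hD := star_left_conjugate_nonneg h (a • (1 - p) - t • c)
    rw [star_mul_block_mul hp hc, smul_nonneg_iff_nonneg_of_pos_left ha, sub_nonneg] at hD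
    have hle : t ^ 2 • (star c * c) ≤ algebraMap ℝ A (a * b) := by
      rw [Algebra.algebraMap_eq_smul_one]
      exact hD.trans (smul_le_smul_of_nonneg_left (sub_le_self 1 hp.nonneg) (by positivity))
    have hnorm := (CStarAlgebra.norm_le_iff_le_algebraMap _ (by positivity)
      (smul_nonneg (sq_nonneg t) (star_mul_self_nonneg c))).2 hle
    rwa [norm_smul, CStarRing.norm_star_mul_self, Real.norm_of_nonneg (sq_nonneg t),
      ← pow_two] at hnorm
  · intro h
    rw [← smul_nonneg_iff_nonneg_of_pos_left ha, smul_block_eq hp hc]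
    refine add_nonneg (star_mul_self_nonneg _) ?_
    calc 0 ≤ (a * b - t ^ 2 * ‖c‖ ^ 2) • (1 - p) := smul_nonneg (sub_nonneg.2 h) hp.one_sub_nonneg
      _ ≤ _ := by
        rw [← sub_nonneg, show (a * b) • (1 - p) - t ^ 2 • (star c * c) -
            (a * b - t ^ 2 * ‖c‖ ^ 2) • (1 - p) = t ^ 2 • (‖c‖ ^ 2 • (1 - p) - star c * c) by module]
        exact smul_nonneg (sq_nonneg t) (sub_nonneg.2 (star_offDiag_mul_offDiag_le hp hc))

end Block

variable [PartialOrder A] [StarOrderedRing A]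

def effects (S : StarSubalgebra ℂ A) : Set A := (S : Set A) ∩ Icc 0 1

lemma convex_effects (S : StarSubalgebra ℂ A) : Convex ℝ (effects S) := by
  refine Convex.inter (fun x hx y hy a b _ _ _ => ?_) (convex_Icc 0 1)
  exact add_mem (S.real_smul_mem hx a) (S.real_smul_mem hy b)

lemma zero_mem_extremePoints_effects (S : StarSubalgebra ℂ A) :
    0 ∈ extremePoints ℝ (effects S) := by
  refine mem_extremePoints.2 ⟨⟨zero_mem S, le_rfl, zero_le_one⟩, ?_⟩
  rintro x ⟨-, hx, -⟩ y ⟨-, hy, -⟩ ⟨a, b, ha, hb, -, hxy⟩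
  have hax : a • x ≤ 0 := by
    rw [← hxy]; exact le_add_of_nonneg_right (smul_nonneg hb.le hy)
  have hby : b • y ≤ 0 := by
    rw [← hxy]; exact le_add_of_nonneg_left (smul_nonneg ha.le hx)
  exact ⟨(smul_eq_zero.1 (hax.antisymm (smul_nonneg ha.le hx))).resolve_left ha.ne',
    (smul_eq_zero.1 (hby.antisymm (smul_nonneg hb.le hy))).resolve_left hb.ne'⟩

lemma mul_self_le_self {x : A} (h0 : 0 ≤ x) (h1 : x ≤ 1) : x * x ≤ x := by
  obtain ⟨s, hs, rfl⟩ : ∃ s, IsSelfAdjoint s ∧ s * s = x :=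
    ⟨CFC.sqrt x, .of_nonneg (CFC.sqrt_nonneg x), CFC.sqrt_mul_sqrt_self x⟩
  simpa [hs.star_eq, mul_assoc] using star_left_conjugate_le_conjugate h1 s

lemma isStarProjection_of_mem_extremePoints_effects {S : StarSubalgebra ℂ A} {x : A}
    (hx : x ∈ extremePoints ℝ (effects S)) : IsStarProjection x := by
  obtain ⟨⟨hxS, hx0, hx1⟩, hext⟩ := mem_extremePoints.1 hx
  have hsq : x * x ≤ x := mul_self_le_self hx0 hx1
  have hsq_mem : x * x ∈ effects S :=
    ⟨mul_mem hxS hxS, (IsSelfAdjoint.of_nonneg hx0).mul_self_nonneg, hsq.trans hx1⟩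
  have hrefl_mem : x + (x - x * x) ∈ effects S := by
    refine ⟨add_mem hxS (sub_mem hxS (mul_mem hxS hxS)), add_nonneg hx0 (sub_nonneg.2 hsq), ?_⟩
    rw [← sub_nonneg, show 1 - (x + (x - x * x)) = (1 - x) * (1 - x) by noncomm_ring]
    exact ((IsSelfAdjoint.one A).sub (.of_nonneg hx0)).mul_self_nonneg
  have hseg : x ∈ openSegment ℝ (x * x) (x + (x - x * x)) :=
    ⟨2⁻¹, 2⁻¹, by norm_num, by norm_num, by norm_num, by module⟩
  exact ⟨(hext _ hsq_mem _ hrefl_mem hseg).1, .of_nonneg hx0⟩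

lemma sub_mem_effects_trans {S : StarSubalgebra ℂ A} {x y z : A} (hx : x ∈ effects S)
    (hz : z ∈ effects S) (hxy : y - x ∈ effects S) (hyz : z - y ∈ effects S) :
    z - x ∈ effects S :=
  ⟨sub_mem hz.1 hx.1, by simpa using add_nonneg hyz.2.1 hxy.2.1,
    (sub_le_self z hx.2.1).trans hz.2.2⟩

lemma block_mem_effects {S : StarSubalgebra ℂ A} {p c : A} (hp : IsStarProjection p)
    (hc : p * c * (1 - p) = c) (hpS : p ∈ S) (hcS : c ∈ S) {a b t : ℝ} (ha : 0 < a) (ha' : a < 1)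
    (hb : 0 ≤ b) (hb' : b ≤ 1) (h : t ^ 2 * ‖c‖ ^ 2 ≤ a * b)
    (h' : t ^ 2 * ‖c‖ ^ 2 ≤ (1 - a) * (1 - b)) : block p c a b t ∈ effects S := by
  refine ⟨block_mem hpS hcS a b t, (block_nonneg_iff hp hc ha hb).2 h, sub_nonneg.1 ?_⟩
  rw [one_sub_block]
  exact (block_nonneg_iff hp hc (by linarith) (by linarith)).2 (by rwa [neg_sq])

lemma IsStarProjection.mul_mul_one_sub_eq_zero_of_sub_add_mem_trans {S : StarSubalgebra ℂ A}
    {p : A} (hp : IsStarProjection p) (hpS : p ∈ S)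
    (htrans : ∀ u ∈ effects S, ∀ v ∈ effects S, ∀ w ∈ effects S,
      v - u + p ∈ effects S → w - v + p ∈ effects S → w - u + p ∈ effects S)
    {e : A} (he : e ∈ S) : p * e * (1 - p) = 0 := by
  by_contra hne
  set c : A := (8 * ‖p * e * (1 - p)‖)⁻¹ • (p * e * (1 - p))
  have hcS : c ∈ S := S.real_smul_mem (mul_mem (mul_mem hpS he) (sub_mem (one_mem S) hpS)) _
  have hc : p * c * (1 - p) = c := by
    rw [mul_smul_comm, smul_mul_assoc, hp.mul_corner_mul_one_sub]
  have hnorm : ‖c‖ = 1 / 8 := by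
    have : ‖p * e * (1 - p)‖ ≠ 0 := norm_ne_zero_iff.2 hne
    rw [norm_smul, norm_inv, norm_mul, Real.norm_of_nonneg (by norm_num), norm_norm]
    field_simp
  have mem : ∀ a b t : ℝ, 0 < a ∧ a < 1 ∧ 0 ≤ b ∧ b ≤ 1 ∧ t ^ 2 / 64 ≤ a * b ∧
      t ^ 2 / 64 ≤ (1 - a) * (1 - b) → block p c a b t ∈ effects S := by
    rintro a b t ⟨ha, ha', hb, hb', h, h'⟩
    refine block_mem_effects hp hc hpS hcS ha ha' hb hb' ?_ ?_ <;> rw [hnorm] <;> linarith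
  -- For the effects `u, v, w` fed to `htrans`, both `v - u + p` and `w - v + p` equal
  -- `block p c (31/32) (1/32) 1`, but `w - u + p = block p c (15/16) (1/16) 2` is not positive,
  -- as `2² / 8² > 15/16 * 1/16`.
  have step : block p c (31 / 32) (1 / 32) 1 ∈ effects S := mem _ _ _ (by norm_num)
  have h := htrans (block p c (1 / 2) (1 / 2) 0) (mem _ _ _ (by norm_num))
    (block p c (15 / 32) (17 / 32) 1) (mem _ _ _ (by norm_num))
    (block p c (7 / 16) (9 / 16) 2) (mem _ _ _ (by norm_num))
    (by rw [block_sub_block_add]; convert step using 2 <;> norm_num)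
    (by rw [block_sub_block_add]; convert step using 2 <;> norm_num)
  rw [block_sub_block_add] at h
  have hneg := (block_nonneg_iff hp hc (by norm_num) (by norm_num)).1 h.2.1
  rw [hnorm] at hneg
  norm_num at hneg

lemma IsStarProjection.commute_of_sub_add_mem_trans {S : StarSubalgebra ℂ A} {p : A}
    (hp : IsStarProjection p) (hpS : p ∈ S)
    (htrans : ∀ u ∈ effects S, ∀ v ∈ effects S, ∀ w ∈ effects S,
      v - u + p ∈ effects S → w - v + p ∈ effects S → w - u + p ∈ effects S)
    {x : A} (hx : x ∈ S) : Commute p x :=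
  hp.commute_of_mul_mul_one_sub_eq_zero
    (hp.mul_mul_one_sub_eq_zero_of_sub_add_mem_trans hpS htrans hx)
    (hp.mul_mul_one_sub_eq_zero_of_sub_add_mem_trans hpS htrans (star_mem hx))

end CStarAlgebra

/-- A bijective affine map of the effect interval of a factor von Neumann algebra onto itself
sends `0` either to `0` or to the identity. -/
theorem affine_bijection_of_factor_effects_image_of_zero
    {H : Type*} [NormedAddCommGroup H] [InnerProductSpace ℂ H] [CompleteSpace H]
    (𝓐 : VonNeumannAlgebra H)
    (hfactor : ∀ x ∈ 𝓐, (∀ y ∈ 𝓐, x * y = y * x) → ∃ c : ℂ, x = c • (1 : H →L[ℂ] H))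
    (E : Set (H →L[ℂ] H)) (hE : E = {x : H →L[ℂ] H | x ∈ 𝓐 ∧ 0 ≤ x ∧ x ≤ 1})
    (φ : (H →L[ℂ] H) → (H →L[ℂ] H))
    (hbij : Set.BijOn φ E E)
    (haff : ∀ x ∈ E, ∀ y ∈ E, ∀ t : ℝ, t ∈ Set.Icc (0 : ℝ) 1 →
      φ ((t : ℂ) • x + ((1 - t : ℝ) : ℂ) • y) = (t : ℂ) • φ x + ((1 - t : ℝ) : ℂ) • φ y) :
    φ 0 = 0 ∨ φ 0 = 1 := by
  set S := 𝓐.toStarSubalgebra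
  obtain rfl : E = effects S := hE
  have hφ : AffineOn (effects S) φ := fun x hx y hy t ht => by
    simpa only [Complex.coe_smul] using haff x hx y hy t ht
  have hconv := convex_effects S
  have h0 := zero_mem_extremePoints_effects S
  have hP : IsStarProjection (φ 0) :=
    isStarProjection_of_mem_extremePoints_effects (hφ.mapsTo_extremePoints hbij hconv h0)
  have hPS : φ 0 ∈ S := (hbij.mapsTo h0.1).1
  have htrans := hφ.sub_add_mem_trans hbij hconv h0.1
    fun x hx _ _ z hz hxy hyz => sub_mem_effects_trans hx hz hxy hyz
  obtain ⟨γ, hγ⟩ := hfactor _ hPS fun y hy => (hP.commute_of_sub_add_mem_trans hPS htrans hy).eq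
  exact hP.isIdempotentElem.eq_zero_or_eq_one_of_eq_smul_one hγ
end

section
/- Let H be a complex Hilbert space, [0,I] the set of effects on H, and φ : [0,I] → [0,I] a bijective map satisfying φ(ABA) = φ(A)φ(B)φ(A) for all A, B ∈ [0,I]. Then for all projections P, Q on H one has P ≤ Q if and only if φ(P) ≤ φ(Q). In particular, φ(0) = 0 and φ(I) = I, and φ maps rank-one projections to rank-one projections. -/
/-!
On projections the order is algebraic: `P ≤ Q ↔ QPQ = P`, and `QPQ ∈ [0, I]`, so the triple
identity together with injectivity transports this relation in both directions. To apply it, `φ`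
must fix `1`: if `φ U = 1` then `φ (U B U) = φ B` for all `B`, so `U² = 1`, which forces `U = 1`
for an effect. Then `φ (P · 1 · P) = (φ P)²` shows that `φ` and `φ⁻¹` preserve projections, so `φ`
is an order automorphism of the projection lattice and preserves its atoms, which in `B(H)` are
exactly the rank-one projections.
-/

open Set Module

lemma IsStarProjection.le_iff_conjugate_eq {A : Type*} [NonUnitalCStarAlgebra A] [PartialOrder A]
    [StarOrderedRing A] {p q : A} (hp : IsStarProjection p) (hq : IsStarProjection q) :
    p ≤ q ↔ q * p * q = p := by
  refine ⟨hq.conjugate_of_nonneg_of_le hp.nonneg, fun h ↦ hp.le_of_mul_eq_right hq ?_⟩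
  rw [← h, ← mul_assoc, ← mul_assoc, hq.isIdempotentElem.eq]

section CStarAlgebra

variable {A : Type*} [CStarAlgebra A] [PartialOrder A] [StarOrderedRing A]

lemma conjugate_mem_Icc_zero_one {a b : A} (ha : a ∈ Icc 0 1) (hb : b ∈ Icc 0 1) :
    a * b * a ∈ Icc 0 1 := by
  refine ⟨conjugate_nonneg_of_nonneg hb.1 ha.1, ?_⟩
  calc a * b * a ≤ a * 1 * a := conjugate_le_conjugate_of_nonneg hb.2 ha.1
    _ = a ^ 2 := by rw [mul_one, sq]
    _ ≤ a ^ 0 := CStarAlgebra.pow_antitone ha.1 ha.2 (Nat.zero_le 2)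
    _ = 1 := pow_zero a

lemma eq_one_of_mem_Icc_of_mul_self_eq_one {a : A} (ha : a ∈ Icc 0 1) (h : a * a = 1) :
    a = 1 := by
  refine le_antisymm ha.2 ?_
  calc 1 = a ^ 2 := by rw [sq, h]
    _ ≤ a ^ 1 := CStarAlgebra.pow_antitone ha.1 ha.2 one_le_two
    _ = a := pow_one a

end CStarAlgebra

def IsMinimalStarProjection {R : Type*} [Mul R] [Star R] [Zero R] [LE R] (p : R) : Prop :=
  IsStarProjection p ∧ p ≠ 0 ∧ ∀ q, IsStarProjection q → q ≤ p → q = 0 ∨ q = p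

def IsJordanTripleMulOn {R : Type*} [Mul R] (φ : R → R) (s : Set R) : Prop :=
  ∀ a ∈ s, ∀ b ∈ s, φ (a * b * a) = φ a * φ b * φ a

namespace IsJordanTripleMulOn

lemma map_zero {R : Type*} [MulZeroClass R] {φ : R → R} {s : Set R}
    (hφ : IsJordanTripleMulOn φ s) (hsurj : SurjOn φ s s) (h0 : 0 ∈ s) : φ 0 = 0 := by
  obtain ⟨z, hz, hz0⟩ := hsurj h0
  calc φ 0 = φ (z * 0 * z) := by rw [mul_zero, zero_mul]
    _ = 0 := by rw [hφ z hz 0 h0, hz0, zero_mul, zero_mul]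

variable {A : Type*} [CStarAlgebra A] [PartialOrder A] [StarOrderedRing A] {φ : A → A}

lemma map_one (hφ : IsJordanTripleMulOn φ (Icc 0 1)) (hbij : BijOn φ (Icc 0 1) (Icc 0 1)) :
    φ 1 = 1 := by
  have h1 : (1 : A) ∈ Icc 0 1 := ⟨zero_le_one, le_rfl⟩
  obtain ⟨u, hu, hu1⟩ := hbij.surjOn h1
  have huu : u * 1 * u = 1 :=
    hbij.injOn (conjugate_mem_Icc_zero_one hu h1) h1 (by rw [hφ u hu 1 h1, hu1, one_mul, mul_one])
  obtain rfl := eq_one_of_mem_Icc_of_mul_self_eq_one hu (by simpa using huu)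
  exact hu1

lemma isStarProjection_apply_iff (hφ : IsJordanTripleMulOn φ (Icc 0 1))
    (hbij : BijOn φ (Icc 0 1) (Icc 0 1)) {a : A} (ha : a ∈ Icc 0 1) :
    IsStarProjection (φ a) ↔ IsStarProjection a := by
  have h1 : (1 : A) ∈ Icc 0 1 := ⟨zero_le_one, le_rfl⟩
  have hmap : φ (a * 1 * a) = φ a * φ a := by rw [hφ a ha 1 h1, map_one hφ hbij, mul_one]
  refine ⟨fun h ↦ ⟨?_, .of_nonneg ha.1⟩, fun h ↦ ⟨?_, .of_nonneg (hbij.mapsTo ha).1⟩⟩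
  · show a * a = a
    simpa using hbij.injOn (conjugate_mem_Icc_zero_one ha h1) ha (hmap.trans h.isIdempotentElem.eq)
  · show φ a * φ a = φ a
    rw [← hmap, mul_one, h.isIdempotentElem.eq]

lemma apply_le_apply_iff (hφ : IsJordanTripleMulOn φ (Icc 0 1))
    (hbij : BijOn φ (Icc 0 1) (Icc 0 1)) {p q : A} (hp : IsStarProjection p)
    (hq : IsStarProjection q) : φ p ≤ φ q ↔ p ≤ q := by
  have hφp := (isStarProjection_apply_iff hφ hbij hp.mem_Icc).mpr hp
  have hφq := (isStarProjection_apply_iff hφ hbij hq.mem_Icc).mpr hq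
  rw [hp.le_iff_conjugate_eq hq, hφp.le_iff_conjugate_eq hφq, ← hφ q hq.mem_Icc p hp.mem_Icc]
  exact hbij.injOn.eq_iff (conjugate_mem_Icc_zero_one hq.mem_Icc hp.mem_Icc) hp.mem_Icc

lemma isMinimalStarProjection_apply (hφ : IsJordanTripleMulOn φ (Icc 0 1))
    (hbij : BijOn φ (Icc 0 1) (Icc 0 1)) {p : A} (hp : IsMinimalStarProjection p) :
    IsMinimalStarProjection (φ p) := by
  obtain ⟨hproj, hp0, hmin⟩ := hp
  have h0 : (0 : A) ∈ Icc 0 1 := ⟨le_rfl, zero_le_one⟩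
  have hφ0 := map_zero hφ hbij.surjOn h0
  refine ⟨(isStarProjection_apply_iff hφ hbij hproj.mem_Icc).mpr hproj, fun h ↦ hp0 ?_,
    fun q hq hqp ↦ ?_⟩
  · exact hbij.injOn hproj.mem_Icc h0 (h.trans hφ0.symm)
  obtain ⟨a, ha, rfl⟩ := hbij.surjOn hq.mem_Icc
  have ha' := (isStarProjection_apply_iff hφ hbij ha).mp hq
  rcases hmin a ha' ((apply_le_apply_iff hφ hbij ha' hproj).mp hqp) with rfl | rfl
  · exact .inl hφ0
  · exact .inr rfl

end IsJordanTripleMulOn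

namespace ContinuousLinearMap

variable {𝕜 E : Type*} [RCLike 𝕜] [NormedAddCommGroup E] [InnerProductSpace 𝕜 E] [CompleteSpace E]

lemma IsStarProjection.le_iff_range_le_range {p q : E →L[𝕜] E} (hp : IsStarProjection p)
    (hq : IsStarProjection q) :
    p ≤ q ↔ LinearMap.range (p : E →ₗ[𝕜] E) ≤ LinearMap.range (q : E →ₗ[𝕜] E) :=
  (coe_le_coe_iff p q).symm.trans <|
    (IsStarProjection.isSymmetricProjection hp).le_iff_range_le_range
      (IsStarProjection.isSymmetricProjection hq)

lemma isMinimalStarProjection_iff_finrank_range_eq_one {p : E →L[𝕜] E}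
    (hp : IsStarProjection p) :
    IsMinimalStarProjection p ↔ finrank 𝕜 (LinearMap.range (p : E →ₗ[𝕜] E)) = 1 := by
  constructor
  · rintro ⟨-, hp0, hmin⟩
    have hrange : LinearMap.range (p : E →ₗ[𝕜] E) ≠ ⊥ := by
      rwa [Ne, LinearMap.range_eq_bot, ← toLinearMap_zero, coe_inj]
    obtain ⟨v, hv, hv0⟩ := (Submodule.ne_bot_iff _).mp hrange
    set U := 𝕜 ∙ v
    have hUp : U.starProjection ≤ p := by
      rwa [IsStarProjection.le_iff_range_le_range isStarProjection_starProjection hp,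
        Submodule.range_starProjection, Submodule.span_singleton_le_iff_mem]
    rcases hmin _ isStarProjection_starProjection hUp with h | h
    · have hv_fixed : U.starProjection v = v :=
        Submodule.starProjection_eq_self_iff.mpr (Submodule.mem_span_singleton_self v)
      exact absurd (by rw [← hv_fixed, h, zero_apply]) hv0
    · rw [← h, Submodule.range_starProjection]
      exact finrank_span_singleton hv0
  · rw [← Submodule.isAtom_iff_finrank_eq_one]
    intro hatom
    refine ⟨hp, fun h ↦ hatom.1 (by simp [h]), fun q hq hqp ↦ ?_⟩
    rcases hatom.le_iff.mp ((IsStarProjection.le_iff_range_le_range hq hp).mp hqp) with h | h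
    · rw [LinearMap.range_eq_bot, ← toLinearMap_zero, coe_inj] at h
      exact .inl h
    · exact .inr ((IsStarProjection.ext_iff hq hp).mpr h)

end ContinuousLinearMap

/-- A bijective Jordan triple multiplicative map of the Hilbert space effect algebra `[0, I]`
preserves the order on projections in both directions; in particular it fixes `0` and `I` and
maps rank-one projections to rank-one projections. -/
theorem jordan_triple_bijection_of_effects_order_on_projections
    {H : Type*} [NormedAddCommGroup H] [InnerProductSpace ℂ H] [CompleteSpace H]
    (φ : (H →L[ℂ] H) → (H →L[ℂ] H))
    (hbij : Set.BijOn φ {A : H →L[ℂ] H | 0 ≤ A ∧ A ≤ 1} {A : H →L[ℂ] H | 0 ≤ A ∧ A ≤ 1})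
    (htriple : ∀ A : H →L[ℂ] H, 0 ≤ A → A ≤ 1 → ∀ B : H →L[ℂ] H, 0 ≤ B → B ≤ 1 →
      φ (A * B * A) = φ A * φ B * φ A) :
    (∀ P Q : H →L[ℂ] H, IsSelfAdjoint P → P * P = P → IsSelfAdjoint Q → Q * Q = Q →
      (P ≤ Q ↔ φ P ≤ φ Q)) ∧
    φ 0 = 0 ∧ φ 1 = 1 ∧
    (∀ P : H →L[ℂ] H, IsSelfAdjoint P → P * P = P →
      Module.finrank ℂ (LinearMap.range (P : H →ₗ[ℂ] H)) = 1 →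
      IsSelfAdjoint (φ P) ∧ φ P * φ P = φ P ∧
        Module.finrank ℂ (LinearMap.range (φ P : H →ₗ[ℂ] H)) = 1) := by
  have hφ : IsJordanTripleMulOn φ (Icc 0 1) := fun a ha b hb ↦ htriple a ha.1 ha.2 b hb.1 hb.2
  refine ⟨fun P Q hP hP2 hQ hQ2 ↦ (hφ.apply_le_apply_iff hbij ⟨hP2, hP⟩ ⟨hQ2, hQ⟩).symm,
    hφ.map_zero hbij.surjOn ⟨le_rfl, zero_le_one⟩, hφ.map_one hbij, fun P hP hP2 hrank ↦ ?_⟩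
  have hPmin : IsMinimalStarProjection P :=
    (ContinuousLinearMap.isMinimalStarProjection_iff_finrank_range_eq_one ⟨hP2, hP⟩).mpr hrank
  have hφPmin := hφ.isMinimalStarProjection_apply hbij hPmin
  exact ⟨hφPmin.1.isSelfAdjoint, hφPmin.1.isIdempotentElem,
    (ContinuousLinearMap.isMinimalStarProjection_iff_finrank_range_eq_one hφPmin.1).mp hφPmin⟩
end

section
/- Let H be a complex Hilbert space, [0,I] the set of effects on H, and φ : [0,I] → [0,I] a bijective map satisfying φ(ABA) = φ(A)φ(B)φ(A) for all A, B ∈ [0,I]. Then: (a) for all projections P, Q on H with PQ = 0 one has φ(P)φ(Q) = 0; and (b) for every projection P on H, φ(I − P) = I − φ(P). -/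
set_option synthInstance.maxHeartbeats 1000000
set_option maxHeartbeats 1000000

section Aux

variable {H : Type*} [NormedAddCommGroup H] [InnerProductSpace ℂ H] [CompleteSpace H]

private lemma effect_sq_le_self (T : H →L[ℂ] H) (h0 : 0 ≤ T) (h1 : T ≤ 1) : T * T ≤ T := by
  set s := CFC.sqrt T with hs
  have hss : s * s = T := CFC.sqrt_mul_sqrt_self T h0
  have hsa : star s = s := (IsSelfAdjoint.of_nonneg (CFC.sqrt_nonneg (a := T))).star_eq
  have key : star s * (1 - T) * s = T - T * T := by
    rw [hsa]; rw [mul_sub, sub_mul, mul_one]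
    rw [show s * T * s = T * T by rw [← hss]; noncomm_ring, hss]
  have h2 : (0 : H →L[ℂ] H) ≤ star s * (1 - T) * s :=
    star_left_conjugate_nonneg (sub_nonneg.2 h1) s
  rw [key] at h2
  exact sub_nonneg.1 h2

private lemma effect_eq_one_of_sq (C : H →L[ℂ] H) (h0 : 0 ≤ C) (h1 : C ≤ 1)
    (h : C * C = 1) : C = 1 := by
  set T := 1 - C with hT
  have hT0 : 0 ≤ T := sub_nonneg.2 h1
  have hT1 : T ≤ 1 := by rw [hT]; exact sub_le_self 1 h0
  have hTT : T * T = T + T := by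
    have h' : T * T = 1 - C - C + C * C := by rw [hT]; noncomm_ring
    rw [h', h, hT]; abel
  have hle := effect_sq_le_self T hT0 hT1
  rw [hTT] at hle
  have hT0' : T ≤ 0 := add_le_iff_nonpos_left.1 hle
  have hTz : T = 0 := le_antisymm hT0' hT0
  rw [hT] at hTz
  exact (sub_eq_zero.1 hTz).symm

private lemma mul_right_eq_zero_of_conj (A P : H →L[ℂ] H) (hA : 0 ≤ A)
    (hP : IsSelfAdjoint P) (h : P * A * P = 0) : A * P = 0 := by
  set s := CFC.sqrt A with hs
  have hss : s * s = A := CFC.sqrt_mul_sqrt_self A hA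
  have hsa : star s = s := (IsSelfAdjoint.of_nonneg (CFC.sqrt_nonneg (a := A))).star_eq
  have h1 : star (s * P) * (s * P) = P * A * P := by
    rw [star_mul, hsa, hP.star_eq, ← hss]; noncomm_ring
  have h2 : s * P = 0 := by
    rw [← CStarRing.star_mul_self_eq_zero_iff (s * P), h1, h]
  calc A * P = s * (s * P) := by rw [← mul_assoc, hss]
    _ = 0 := by rw [h2, mul_zero]

end Aux

/-- A bijective Jordan triple multiplicative map of the Hilbert space effect algebra `[0, I]`
preserves orthogonality of projections and the orthocomplementation `P ↦ I - P`. -/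
theorem jordan_triple_bijection_of_effects_orthogonality
    {H : Type*} [NormedAddCommGroup H] [InnerProductSpace ℂ H] [CompleteSpace H]
    (φ : (H →L[ℂ] H) → (H →L[ℂ] H))
    (hbij : Set.BijOn φ {A : H →L[ℂ] H | 0 ≤ A ∧ A ≤ 1} {A : H →L[ℂ] H | 0 ≤ A ∧ A ≤ 1})
    (htriple : ∀ A : H →L[ℂ] H, 0 ≤ A → A ≤ 1 → ∀ B : H →L[ℂ] H, 0 ≤ B → B ≤ 1 →
      φ (A * B * A) = φ A * φ B * φ A) :
    (∀ P Q : H →L[ℂ] H, IsSelfAdjoint P → P * P = P → IsSelfAdjoint Q → Q * Q = Q →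
      P * Q = 0 → φ P * φ Q = 0) ∧
    (∀ P : H →L[ℂ] H, IsSelfAdjoint P → P * P = P → φ (1 - P) = 1 - φ P) := by
  set E : Set (H →L[ℂ] H) := {A : H →L[ℂ] H | 0 ≤ A ∧ A ≤ 1} with hE
  have h1E : (1 : H →L[ℂ] H) ∈ E := ⟨zero_le_one, le_refl 1⟩
  have h0E : (0 : H →L[ℂ] H) ∈ E := ⟨le_refl 0, zero_le_one⟩
  -- projections are effects
  have hprojE : ∀ P : H →L[ℂ] H, IsSelfAdjoint P → P * P = P → P ∈ E := by
    intro P hsa hsq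
    constructor
    · have := star_mul_self_nonneg P
      rwa [hsa.star_eq, hsq] at this
    · have hsa' : star (1 - P) = 1 - P := by rw [star_sub, star_one, hsa.star_eq]
      have : (0 : H →L[ℂ] H) ≤ star (1 - P) * (1 - P) := star_mul_self_nonneg _
      rw [hsa'] at this
      have hcalc : (1 - P) * (1 - P) = 1 - P := by
        rw [mul_sub, sub_mul, sub_mul, mul_one, one_mul, hsq]; abel
      rw [hcalc] at this
      exact sub_nonneg.1 this
  -- φ(1) = 1
  have hφ1 : φ 1 = 1 := by
    obtain ⟨B, hB, hφB⟩ := hbij.surjOn h1E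
    have := htriple 1 h1E.1 h1E.2 B hB.1 hB.2
    rw [one_mul, mul_one, hφB] at this
    have hsq : φ 1 * φ 1 = 1 := by
      have h' : (1 : H →L[ℂ] H) = φ 1 * 1 * φ 1 := this
      rw [mul_one] at h'; exact h'.symm
    have hφ1E := hbij.mapsTo h1E
    exact effect_eq_one_of_sq _ hφ1E.1 hφ1E.2 hsq
  -- φ(0) = 0
  have hφ0 : φ 0 = 0 := by
    obtain ⟨B, hB, hφB⟩ := hbij.surjOn h0E
    have := htriple B hB.1 hB.2 0 h0E.1 h0E.2
    rw [mul_zero, zero_mul, hφB, zero_mul, mul_zero] at this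
    exact this
  -- φ maps projections to projections
  have hprojφ : ∀ P : H →L[ℂ] H, IsSelfAdjoint P → P * P = P →
      φ P * φ P = φ P ∧ IsSelfAdjoint (φ P) := by
    intro P hsa hsq
    have hPE := hprojE P hsa hsq
    have := htriple P hPE.1 hPE.2 1 h1E.1 h1E.2
    rw [mul_one, hsq, hφ1, mul_one] at this
    exact ⟨this.symm, IsSelfAdjoint.of_nonneg (hbij.mapsTo hPE).1⟩
  -- part (a)
  have parta : ∀ P Q : H →L[ℂ] H, IsSelfAdjoint P → P * P = P → IsSelfAdjoint Q → Q * Q = Q →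
      P * Q = 0 → φ P * φ Q = 0 := by
    intro P Q hPsa hPsq hQsa hQsq hPQ
    have hPE := hprojE P hPsa hPsq
    have hQE := hprojE Q hQsa hQsq
    have hPQP : P * Q * P = 0 := by rw [hPQ, zero_mul]
    have htr := htriple P hPE.1 hPE.2 Q hQE.1 hQE.2
    rw [hPQP, hφ0] at htr
    -- p q p = 0 with q a projection ⇒ q p = 0 ⇒ p q = 0
    obtain ⟨hqsq, hqsa⟩ := hprojφ Q hQsa hQsq
    obtain ⟨hpsq, hpsa⟩ := hprojφ P hPsa hPsq
    have hkey : star (φ Q * φ P) * (φ Q * φ P) = 0 := by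
      rw [star_mul, hqsa.star_eq, hpsa.star_eq]
      calc φ P * φ Q * (φ Q * φ P) = φ P * (φ Q * φ Q) * φ P := by noncomm_ring
        _ = φ P * φ Q * φ P := by rw [hqsq]
        _ = 0 := htr.symm
    have hqp : φ Q * φ P = 0 := (CStarRing.star_mul_self_eq_zero_iff _).1 hkey
    have : φ P * φ Q = star (φ Q * φ P) := by
      rw [star_mul, hqsa.star_eq, hpsa.star_eq]
    rw [this, hqp, star_zero]
  refine ⟨parta, ?_⟩
  -- part (b)
  intro P hPsa hPsq
  set R : H →L[ℂ] H := 1 - P with hR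
  have hRsa : IsSelfAdjoint R := by
    rw [hR]; exact IsSelfAdjoint.sub (by simp [IsSelfAdjoint]) hPsa
  have hRsq : R * R = R := by
    rw [hR, mul_sub, sub_mul, sub_mul, mul_one, one_mul, hPsq]; abel
  have hPR : P * R = 0 := by rw [hR, mul_sub, mul_one, hPsq, sub_self]
  have hRP : R * P = 0 := by rw [hR, sub_mul, one_mul, hPsq, sub_self]
  have hpr := parta P R hPsa hPsq hRsa hRsq hPR
  have hrp := parta R P hRsa hRsq hPsa hPsq hRP
  obtain ⟨hpsq, hpsa⟩ := hprojφ P hPsa hPsq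
  obtain ⟨hrsq, hrsa⟩ := hprojφ R hRsa hRsq
  have hPE := hprojE P hPsa hPsq
  have hRE := hprojE R hRsa hRsq
  -- s := φP + φR is a projection
  have hssa : IsSelfAdjoint (φ P + φ R) := hpsa.add hrsa
  have hssq : (φ P + φ R) * (φ P + φ R) = φ P + φ R := by
    rw [add_mul, mul_add, mul_add, hpsq, hrsq, hpr, hrp]; abel
  have hsE := hprojE _ hssa hssq
  -- e := 1 - (φP + φR) is an effect
  have heE : (1 - (φ P + φ R)) ∈ E := by
    constructor
    · exact sub_nonneg.2 hsE.2
    · have : (0 : H →L[ℂ] H) ≤ φ P + φ R := hsE.1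
      calc (1 : H →L[ℂ] H) - (φ P + φ R) ≤ 1 - 0 := by
              exact sub_le_sub le_rfl this
        _ = 1 := sub_zero 1
  obtain ⟨A, hAE, hφA⟩ := hbij.surjOn heE
  -- P * A * P = 0
  have hkill : ∀ S : H →L[ℂ] H, IsSelfAdjoint S → S * S = S → S ∈ E →
      φ S * (1 - (φ P + φ R)) = 0 → A * S = 0 := by
    intro S hSsa hSsq hSE hzero
    have htr := htriple S hSE.1 hSE.2 A hAE.1 hAE.2
    rw [hφA] at htr
    have h1 : φ S * (1 - (φ P + φ R)) * φ S = 0 := by rw [hzero, zero_mul]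
    rw [h1] at htr
    have hSASE : (S * A * S) ∈ E := by
      constructor
      · have := star_left_conjugate_nonneg hAE.1 S
        rwa [hSsa.star_eq] at this
      · have h2 := star_left_conjugate_le_conjugate hAE.2 S
        rw [hSsa.star_eq, mul_one, hSsq] at h2
        exact le_trans h2 (hprojE S hSsa hSsq).2
    have hSAS : S * A * S = 0 := by
      apply hbij.injOn hSASE h0E
      rw [htr, hφ0]
    exact mul_right_eq_zero_of_conj A S hAE.1 hSsa hSAS
  have hpe : φ P * (1 - (φ P + φ R)) = 0 := by
    rw [mul_sub, mul_one, mul_add, hpsq, hpr]; abel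
  have hre : φ R * (1 - (φ P + φ R)) = 0 := by
    rw [mul_sub, mul_one, mul_add, hrsq, hrp]; abel
  have hAP : A * P = 0 := hkill P hPsa hPsq hPE hpe
  have hAR : A * R = 0 := hkill R hRsa hRsq hRE hre
  have hA0 : A = 0 := by
    have : A * (P + R) = 0 := by rw [mul_add, hAP, hAR, add_zero]
    rw [hR] at this
    simpa using this
  have he0 : (1 : H →L[ℂ] H) - (φ P + φ R) = 0 := by
    rw [← hφA, hA0, hφ0]
  exact eq_sub_of_add_eq' (sub_eq_zero.1 he0).symm
end

section
/- Let H be a complex Hilbert space, B_s(H) the set of all bounded self-adjoint operators on H, and φ : B_s(H) → B_s(H) a bijective map satisfying φ(ABA) = φ(A)φ(B)φ(A) for all A, B ∈ B_s(H). Then either φ(I) = I or φ(I) = −I. -/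
/-!
Taking `A = I` in the triple identity and using surjectivity onto `B_s(H)`, the operator
`P = φ(I)` satisfies `P C P = C` for every self-adjoint `C`. For `C = I` this gives `P² = I`,
and then `P C = P (P C P) = C P`. Since every operator is `Re T + i Im T`, `P` lies in the
center of `B(H)`, which consists of the scalars (the `Algebra.IsCentral` instance for
continuous endomorphisms of a space with separating dual); a scalar squaring to `1` is `±1`.
-/

theorem Commute.of_mul_self_eq_one_of_mul_mul_eq_self {M : Type*} [Monoid M] {p c : M}
    (hp : p * p = 1) (hc : p * c * p = c) : Commute p c :=
  calc p * c = p * (p * c * p) := by rw [hc]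
    _ = c * p := by rw [← mul_assoc, ← mul_assoc, hp, one_mul]

theorem mem_center_of_forall_isSelfAdjoint_commute {A : Type*} [Ring A] [StarRing A]
    [Algebra ℂ A] [StarModule ℂ A] {p : A} (h : ∀ c : A, IsSelfAdjoint c → Commute p c) :
    p ∈ Subalgebra.center ℂ A := by
  rw [Subalgebra.mem_center_iff]
  intro a
  rw [← realPart_add_I_smul_imaginaryPart a]
  exact ((h _ (realPart a).2).add_right ((h _ (imaginaryPart a).2).smul_right Complex.I)).eq.symm

theorem eq_one_or_eq_neg_one_of_mem_center_of_mul_self_eq_one {K A : Type*} [Field K] [Ring A]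
    [Algebra K A] [Algebra.IsCentral K A] {p : A} (hp : p ∈ Subalgebra.center K A)
    (hpp : p * p = 1) : p = 1 ∨ p = -1 := by
  nontriviality A
  obtain ⟨c, rfl⟩ := Algebra.mem_bot.mp (Algebra.IsCentral.out hp)
  have hc : c * c = 1 := (algebraMap K A).injective (by rw [map_mul, hpp, map_one])
  rcases mul_self_eq_one_iff.mp hc with rfl | rfl
  · exact .inl (map_one _)
  · exact .inr (by rw [map_neg, map_one])

theorem eq_one_or_eq_neg_one_of_forall_isSelfAdjoint_mul_mul_eq_self {A : Type*} [Ring A]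
    [StarRing A] [Algebra ℂ A] [StarModule ℂ A] [Algebra.IsCentral ℂ A] {p : A}
    (h : ∀ c : A, IsSelfAdjoint c → p * c * p = c) : p = 1 ∨ p = -1 := by
  have hpp : p * p = 1 := by simpa using h 1 (.one A)
  exact eq_one_or_eq_neg_one_of_mem_center_of_mul_self_eq_one
    (mem_center_of_forall_isSelfAdjoint_commute fun c hc ↦
      .of_mul_self_eq_one_of_mul_mul_eq_self hpp (h c hc)) hpp

/-- A bijective Jordan triple multiplicative map of the set of bounded self-adjoint operators
on a complex Hilbert space sends the identity to `I` or to `-I`. -/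
theorem jordan_triple_bijection_of_selfAdjoint_image_of_one
    {H : Type*} [NormedAddCommGroup H] [InnerProductSpace ℂ H] [CompleteSpace H]
    (φ : (H →L[ℂ] H) → (H →L[ℂ] H))
    (hbij : Set.BijOn φ {A : H →L[ℂ] H | IsSelfAdjoint A} {A : H →L[ℂ] H | IsSelfAdjoint A})
    (htriple : ∀ A : H →L[ℂ] H, IsSelfAdjoint A → ∀ B : H →L[ℂ] H, IsSelfAdjoint B →
      φ (A * B * A) = φ A * φ B * φ A) :
    φ 1 = 1 ∨ φ 1 = -1 := by
  refine eq_one_or_eq_neg_one_of_forall_isSelfAdjoint_mul_mul_eq_self fun C hC ↦ ?_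
  obtain ⟨B, hB, rfl⟩ := hbij.surjOn hC
  simpa using (htriple 1 (.one _) B hB).symm
end
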